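/- For every positive integer k there exists an integer N such that every vertical alternation of length at least N contains a vertical parallel alternation of length 2k or a vertical wedge alternation of length 2k. -/

import Mathlib

/-- A list of naturals is a permutation (in one-line notation) of `1,…,n`
where `n` is its length. -/
def IsPermList (l : List ℕ) : Prop :=
  l.Perm ((List.range l.length).map (· + 1))

/-- `f` is an occurrence of the pattern `β` in `π`: a strictly increasing
choice of indices of `π` whose entries are order isomorphic to `β`. -/
def IsOccurrence (π β : List ℕ) (f : Fin β.length → Fin π.length) : Prop :=
  StrictMono f ∧ ∀ s t : Fin β.length, π.get (f s) < π.get (f t) ↔ β.get s < β.get t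

/-- `π` contains the pattern `β`. -/
def PContains (π β : List ℕ) : Prop :=
  ∃ f : Fin β.length → Fin π.length, IsOccurrence π β f

/-- `π` avoids the pattern `β`. -/
def PAvoids (π β : List ℕ) : Prop :=
  ¬ PContains π β

/-- The class of permutations avoiding every member of `B`. -/
def Av (B : Set (List ℕ)) : Set (List ℕ) :=
  {π | IsPermList π ∧ ∀ β ∈ B, PAvoids π β}

/-- Insert a new maximum entry at (0-indexed) position `i` of `l`. -/
def insertMax (l : List ℕ) (i : ℕ) : List ℕ :=
  l.insertIdx i (l.length + 1)

/-- Position `i` is an active site of `l` relative to `B`. -/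
def ActiveSite (B : Set (List ℕ)) (l : List ℕ) (i : ℕ) : Prop :=
  i ≤ l.length ∧ insertMax l i ∈ Av B

/-- The increasing permutation `1,2,…,n`. -/
def incrPerm (n : ℕ) : List ℕ :=
  (List.range n).map (· + 1)

/-- A permutation (as a list) is a vertical alternation: every entry in an even
(1-indexed) position lies above every entry in an odd position, or vice versa.
(Index `s : Fin l.length` corresponds to 1-indexed position `s + 1`.) -/
def VerticalAlternation (l : List ℕ) : Prop :=
  (∀ s t : Fin l.length, s.val % 2 = 1 → t.val % 2 = 0 → l.get t < l.get s) ∨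
  (∀ s t : Fin l.length, s.val % 2 = 1 → t.val % 2 = 0 → l.get s < l.get t)

/-- The subsequence of entries in positions congruent to `r` (0-indexed, mod 2)
is increasing. -/
def IncOnRes (l : List ℕ) (r : ℕ) : Prop :=
  ∀ s t : Fin l.length, s < t → s.val % 2 = r → t.val % 2 = r → l.get s < l.get t

/-- The subsequence of entries in positions congruent to `r` (0-indexed, mod 2)
is decreasing. -/
def DecOnRes (l : List ℕ) (r : ℕ) : Prop :=
  ∀ s t : Fin l.length, s < t → s.val % 2 = r → t.val % 2 = r → l.get t < l.get s

/-- A vertical parallel alternation: a vertical alternation of even length whose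
odd-position and even-position subsequences are both increasing or both decreasing. -/
def IsVertParallel (l : List ℕ) : Prop :=
  VerticalAlternation l ∧ Even l.length ∧
    ((IncOnRes l 0 ∧ IncOnRes l 1) ∨ (DecOnRes l 0 ∧ DecOnRes l 1))

/-- A vertical wedge alternation: a vertical alternation of even length for which one of
the odd-position and even-position subsequences is increasing and the other decreasing. -/
def IsVertWedge (l : List ℕ) : Prop :=
  VerticalAlternation l ∧ Even l.length ∧
    ((IncOnRes l 0 ∧ DecOnRes l 1) ∨ (DecOnRes l 0 ∧ IncOnRes l 1))

/-- The vertical parallel alternation `σ_m`, with `σ_m(2i−1) = m+1−i` and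
`σ_m(2i) = 2m+1−i` (1-indexed). -/
def sigmaAlt (m : ℕ) : List ℕ :=
  (List.range (2 * m)).map (fun j => if j % 2 = 0 then m - j / 2 else 2 * m - j / 2)

/-- The vertical wedge alternation `τ_m`, with `τ_m(2i−1) = m+i` and
`τ_m(2i) = m+1−i` (1-indexed). -/
def tauAlt (m : ℕ) : List ℕ :=
  (List.range (2 * m)).map (fun j => if j % 2 = 0 then m + j / 2 + 1 else m - j / 2)

/-- Standardization: replace each entry of `l` by its rank among the entries of `l`. -/
def stList (l : List ℕ) : List ℕ :=
  l.map (fun x => (l.filter (fun y => y ≤ x)).length)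

/-!
Split `π` into its `⌊n/2⌋` pairs of consecutive entries `(π(2i-1), π(2i))`. Applying the
Erdős–Szekeres theorem first to the first entries of the pairs and then to the second entries of
the surviving pairs yields `k` pairs along which both coordinates are strictly monotone. The `2k`
entries of these pairs keep the parity of their positions, so their pattern is again a vertical
alternation, now with monotone odd and even halves: a parallel or a wedge alternation.
-/

open Finset Function

section ErdosSzekeres

variable {ι α β : Type*} [LinearOrder ι] [LinearOrder α] [LinearOrder β]

theorem exists_strictMonoOn_or_strictAntiOn_of_two_pow_le {f : ι → α} :
    ∀ (a b : ℕ) {s : Finset ι}, Set.InjOn f s → 2 ^ (a + b) ≤ #s →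
      (∃ t ⊆ s, a ≤ #t ∧ StrictMonoOn f t) ∨ (∃ t ⊆ s, b ≤ #t ∧ StrictAntiOn f t)
  | 0, _, _, _, _ =>
    Or.inl ⟨∅, empty_subset _, le_rfl, fun _ h => absurd h (notMem_empty _)⟩
  | _ + 1, 0, _, _, _ =>
    Or.inr ⟨∅, empty_subset _, le_rfl, fun _ h => absurd h (notMem_empty _)⟩
  | a + 1, b + 1, s, hf, hs => by
    -- Ramsey-style step: split off the first index `x` and recurse into the indices whose
    -- values lie above `f x` or below it, whichever set is larger.
    have hne : s.Nonempty := card_pos.1 (lt_of_lt_of_le (Nat.two_pow_pos _) hs)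
    set x := s.min' hne
    have hx : x ∈ s := s.min'_mem hne
    set U := (s.erase x).filter (fun y => f x < f y)
    set D := (s.erase x).filter (fun y => f y < f x)
    have hUs : U ⊆ s := (filter_subset _ _).trans (erase_subset _ _)
    have hDs : D ⊆ s := (filter_subset _ _).trans (erase_subset _ _)
    have hUD : #s ≤ #U + #D + 1 := by
      have hsplit : s.erase x ⊆ U ∪ D := fun y hy => by
        have hfy : f y ≠ f x := fun h => (ne_of_mem_erase hy) (hf (mem_of_mem_erase hy) hx h)
        rcases hfy.lt_or_gt with h | h <;> simp [U, D, hy, h]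
      have := card_le_card hsplit
      have := card_union_le U D
      have := card_erase_add_one hx
      omega
    have hxt : ∀ t ⊆ s.erase x, x ∉ t ∧ ∀ y ∈ t, x < y := fun t ht =>
      ⟨fun h => by simpa using ht h, fun y hy =>
        lt_of_le_of_ne (s.min'_le y (mem_of_mem_erase (ht hy))) (ne_of_mem_erase (ht hy)).symm⟩
    have hpow : 2 ^ (a + 1 + (b + 1)) = 2 ^ (a + (b + 1)) + 2 ^ (a + 1 + b) := by
      rw [show a + 1 + b = a + (b + 1) by omega, show a + 1 + (b + 1) = a + (b + 1) + 1 by omega,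
        pow_succ]
      ring
    rcases le_or_gt (2 ^ (a + (b + 1))) #U with hU | hU
    · rcases exists_strictMonoOn_or_strictAntiOn_of_two_pow_le a (b + 1) (hf.mono hUs) hU with
        ⟨t, htU, hta, hmono⟩ | ⟨t, htU, htb, hanti⟩
      · obtain ⟨hxt, hlt⟩ := hxt t (htU.trans (filter_subset _ _))
        refine Or.inl ⟨insert x t, insert_subset hx (htU.trans hUs), ?_, ?_⟩
        · rw [card_insert_of_notMem hxt]; omega
        · rw [coe_insert, strictMonoOn_insert_iff_of_forall_ge fun y hy => (hlt y hy).le]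
          exact ⟨fun y hy _ => (mem_filter.1 (htU hy)).2, hmono⟩
      · exact Or.inr ⟨t, htU.trans hUs, htb, hanti⟩
    · have hD : 2 ^ (a + 1 + b) ≤ #D := by omega
      rcases exists_strictMonoOn_or_strictAntiOn_of_two_pow_le (a + 1) b (hf.mono hDs) hD with
        ⟨t, htD, hta, hmono⟩ | ⟨t, htD, htb, hanti⟩
      · exact Or.inl ⟨t, htD.trans hDs, hta, hmono⟩
      · obtain ⟨hxt, hlt⟩ := hxt t (htD.trans (filter_subset _ _))
        refine Or.inr ⟨insert x t, insert_subset hx (htD.trans hDs), ?_, ?_⟩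
        · rw [card_insert_of_notMem hxt]; omega
        · rw [coe_insert, strictAntiOn_insert_iff_of_forall_ge fun y hy => (hlt y hy).le]
          exact ⟨fun y hy _ => (mem_filter.1 (htD hy)).2, hanti⟩

theorem exists_card_eq_and_strictMonoOn_or_strictAntiOn {f : ι → α} {s : Finset ι}
    (hf : Set.InjOn f s) {k : ℕ} (hs : 4 ^ k ≤ #s) :
    ∃ t ⊆ s, #t = k ∧ (StrictMonoOn f t ∨ StrictAntiOn f t) := by
  rw [show 4 ^ k = 2 ^ (k + k) by rw [← two_mul, pow_mul]; norm_num] at hs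
  rcases exists_strictMonoOn_or_strictAntiOn_of_two_pow_le k k hf hs with
    ⟨t, hts, hkt, ht⟩ | ⟨t, hts, hkt, ht⟩ <;>
  obtain ⟨u, hut, rfl⟩ := exists_subset_card_eq hkt
  · exact ⟨u, hut.trans hts, rfl, Or.inl (ht.mono hut)⟩
  · exact ⟨u, hut.trans hts, rfl, Or.inr (ht.mono hut)⟩

theorem exists_common_strictMono_or_strictAnti_subseq [Fintype ι] {f : ι → α} {g : ι → β}
    (hf : Injective f) (hg : Injective g) {k : ℕ} (hk : 4 ^ 4 ^ k ≤ Fintype.card ι) :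
    ∃ e : Fin k → ι, StrictMono e ∧ (StrictMono (f ∘ e) ∨ StrictAnti (f ∘ e)) ∧
      (StrictMono (g ∘ e) ∨ StrictAnti (g ∘ e)) := by
  obtain ⟨t, -, ht, hft⟩ :=
    exists_card_eq_and_strictMonoOn_or_strictAntiOn hf.injOn (s := univ) hk
  obtain ⟨u, hut, hu, hgu⟩ := exists_card_eq_and_strictMonoOn_or_strictAntiOn
    (s := t) (k := k) hg.injOn ht.ge
  have hfu : StrictMonoOn f u ∨ StrictAntiOn f u := hft.imp (·.mono hut) (·.mono hut)
  set e := u.orderEmbOfFin hu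
  have hmem : ∀ i, e i ∈ u := u.orderEmbOfFin_mem hu
  refine ⟨e, e.strictMono,
    hfu.imp (fun h i j hij => h (hmem i) (hmem j) (e.strictMono hij))
      (fun h i j hij => h (hmem i) (hmem j) (e.strictMono hij)),
    hgu.imp (fun h i j hij => h (hmem i) (hmem j) (e.strictMono hij))
      (fun h i j hij => h (hmem i) (hmem j) (e.strictMono hij))⟩

end ErdosSzekeres

section Standardization

theorem strictMonoOn_length_filter_le (l : List ℕ) :
    StrictMonoOn (fun x => (l.filter (fun y => y ≤ x)).length) {x | x ∈ l} := by
  rintro x - z hz hxz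
  simp only [← List.countP_eq_length_filter]
  induction l with
  | nil => simp at hz
  | cons a l ih =>
    have hle : l.countP (fun y => y ≤ x) ≤ l.countP (fun y => y ≤ z) :=
      List.countP_mono_left fun y _ => by simp only [decide_eq_true_eq]; omega
    rcases List.mem_cons.1 hz with rfl | hz
    · simp [hxz.not_ge]; omega
    · have := ih hz
      simp only [List.countP_cons, decide_eq_true_eq]
      split_ifs <;> omega

theorem length_stList (l : List ℕ) : (stList l).length = l.length := List.length_map _

theorem getElem_stList_lt_getElem_stList_iff {l : List ℕ} {i j : ℕ}
    (hi : i < (stList l).length) (hj : j < (stList l).length) :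
    (stList l)[i] < (stList l)[j] ↔
      l[i]'(length_stList l ▸ hi) < l[j]'(length_stList l ▸ hj) := by
  simp only [stList, List.getElem_map]
  exact (strictMonoOn_length_filter_le l).lt_iff_lt (List.getElem_mem _) (List.getElem_mem _)

theorem isPermList_stList {l : List ℕ} (hl : l.Nodup) : IsPermList (stList l) := by
  have hrank := strictMonoOn_length_filter_le l
  refine List.Subperm.perm_of_length_le ?_ (by simp)
  refine List.subperm_of_subset ((List.nodup_map_iff_inj_on hl).2 fun x hx y hy h => ?_) ?_
  · exact hrank.injOn hx hy h
  · intro r hr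
    obtain ⟨x, hx, rfl⟩ := List.mem_map.1 hr
    have hpos : 0 < (l.filter (fun y => y ≤ x)).length :=
      List.length_pos_iff_exists_mem.2 ⟨x, by simpa using hx⟩
    have hle := List.length_filter_le (fun y => y ≤ x) l
    simp only [List.mem_map, List.mem_range, length_stList]
    exact ⟨(l.filter (fun y => y ≤ x)).length - 1, by omega, by omega⟩

theorem IsPermList.nodup {l : List ℕ} (hl : IsPermList l) : l.Nodup :=
  hl.nodup_iff.2 (List.nodup_range.map fun _ _ => Nat.succ.inj)

theorem exists_isOccurrence_of_strictMono {π : List ℕ} (hπ : π.Nodup) {L : ℕ}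
    {F : Fin L → Fin π.length} (hF : StrictMono F) :
    ∃ β : List ℕ, IsPermList β ∧
      ∃ h : β.length = L, IsOccurrence π β (F ∘ Fin.cast h) := by
  set l := List.ofFn fun s => π.get (F s)
  have hl : l.Nodup := List.nodup_ofFn.2 (hπ.injective_get.comp hF.injective)
  have h : (stList l).length = L := by simp [length_stList, l]
  refine ⟨stList l, isPermList_stList hl, h, hF.comp (Fin.castOrderIso h).strictMono, ?_⟩
  intro s t
  simp only [List.get_eq_getElem, getElem_stList_lt_getElem_stList_iff, l, List.getElem_ofFn,
    comp_apply]
  rfl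

end Standardization

theorem VerticalAlternation.of_isOccurrence {π β : List ℕ} {f : Fin β.length → Fin π.length}
    (hπ : VerticalAlternation π) (hf : IsOccurrence π β f)
    (hpar : ∀ s, (f s : ℕ) % 2 = s % 2) : VerticalAlternation β := by
  rcases hπ with h | h
  · exact Or.inl fun s t hs ht => (hf.2 t s).1 (h _ _ (by rwa [hpar]) (by rwa [hpar]))
  · exact Or.inr fun s t hs ht => (hf.2 s t).1 (h _ _ (by rwa [hpar]) (by rwa [hpar]))

section Pairs

def pairEntry (π : List ℕ) (r : Fin 2) (i : Fin (π.length / 2)) : ℕ :=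
  π.get ⟨2 * i + r, by omega⟩

theorem injective_pairEntry {π : List ℕ} (hπ : π.Nodup) (r : Fin 2) :
    Injective (pairEntry π r) := fun i j h => by
  have := congrArg Fin.val (hπ.injective_get h)
  simp only at this
  exact Fin.ext (by omega)

def pairPositions {n k : ℕ} (g : Fin k → Fin (n / 2)) (s : Fin (2 * k)) : Fin n :=
  ⟨2 * g ⟨s / 2, by omega⟩ + s % 2, by omega⟩

variable {n k : ℕ} {g : Fin k → Fin (n / 2)}

theorem strictMono_pairPositions (hg : StrictMono g) : StrictMono (pairPositions g) := by
  intro s t hst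
  rw [Fin.lt_def] at hst
  simp only [pairPositions, Fin.mk_lt_mk]
  rcases Nat.lt_or_ge (s / 2) (t / 2) with h | h
  · have := @hg ⟨s / 2, by omega⟩ ⟨t / 2, by omega⟩ h
    rw [Fin.lt_def] at this
    omega
  · have : (⟨s / 2, by omega⟩ : Fin k) = ⟨t / 2, by omega⟩ :=
      Fin.ext (show (s : ℕ) / 2 = t / 2 by omega)
    rw [this]
    omega

theorem pairPositions_mod_two (s : Fin (2 * k)) : (pairPositions g s : ℕ) % 2 = s % 2 := by
  simp only [pairPositions]
  omega

variable {π : List ℕ} {g : Fin k → Fin (π.length / 2)}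

theorem get_pairPositions {s : Fin (2 * k)} {r : Fin 2} (hs : (s : ℕ) % 2 = r) :
    π.get (pairPositions g s) = pairEntry π r (g ⟨s / 2, by omega⟩) := by
  obtain ⟨r, hr⟩ := r
  obtain rfl : (s : ℕ) % 2 = r := hs
  rfl

variable {β : List ℕ} {h : β.length = 2 * k}

theorem IsOccurrence.incOnRes_of_pairPositions
    (hβ : IsOccurrence π β (pairPositions g ∘ Fin.cast h)) {r : Fin 2}
    (hmono : StrictMono (pairEntry π r ∘ g)) : IncOnRes β r := by
  intro s t hst hs ht
  refine (hβ.2 s t).1 ?_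
  simp only [comp_apply, get_pairPositions (s := Fin.cast h s) hs,
    get_pairPositions (s := Fin.cast h t) ht]
  exact hmono (Fin.mk_lt_mk.2 (by rw [Fin.lt_def] at hst; simp only [Fin.val_cast]; omega))

theorem IsOccurrence.decOnRes_of_pairPositions
    (hβ : IsOccurrence π β (pairPositions g ∘ Fin.cast h)) {r : Fin 2}
    (hanti : StrictAnti (pairEntry π r ∘ g)) : DecOnRes β r := by
  intro s t hst hs ht
  refine (hβ.2 t s).1 ?_
  simp only [comp_apply, get_pairPositions (s := Fin.cast h s) hs,
    get_pairPositions (s := Fin.cast h t) ht]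
  exact hanti (Fin.mk_lt_mk.2 (by rw [Fin.lt_def] at hst; simp only [Fin.val_cast]; omega))

theorem exists_vertParallel_or_vertWedge_of_monotone_pairs (hπ : π.Nodup)
    (hva : VerticalAlternation π) (hg : StrictMono g)
    (h0 : StrictMono (pairEntry π 0 ∘ g) ∨ StrictAnti (pairEntry π 0 ∘ g))
    (h1 : StrictMono (pairEntry π 1 ∘ g) ∨ StrictAnti (pairEntry π 1 ∘ g)) :
    ∃ β : List ℕ, IsPermList β ∧ β.length = 2 * k ∧
      (IsVertParallel β ∨ IsVertWedge β) ∧ PContains π β := by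
  obtain ⟨β, hβ, hlen, hocc⟩ :=
    exists_isOccurrence_of_strictMono hπ (strictMono_pairPositions hg)
  have hvert : VerticalAlternation β :=
    hva.of_isOccurrence hocc fun s => pairPositions_mod_two (Fin.cast hlen s)
  have heven : Even β.length := hlen ▸ even_two_mul k
  refine ⟨β, hβ, hlen, ?_, _, hocc⟩
  rcases h0 with h0 | h0 <;> rcases h1 with h1 | h1
  · exact Or.inl ⟨hvert, heven, Or.inl ⟨hocc.incOnRes_of_pairPositions h0,
      hocc.incOnRes_of_pairPositions h1⟩⟩
  · exact Or.inr ⟨hvert, heven, Or.inl ⟨hocc.incOnRes_of_pairPositions h0,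
      hocc.decOnRes_of_pairPositions h1⟩⟩
  · exact Or.inr ⟨hvert, heven, Or.inr ⟨hocc.decOnRes_of_pairPositions h0,
      hocc.incOnRes_of_pairPositions h1⟩⟩
  · exact Or.inl ⟨hvert, heven, Or.inr ⟨hocc.decOnRes_of_pairPositions h0,
      hocc.decOnRes_of_pairPositions h1⟩⟩

end Pairs

theorem stmt2_general (k : ℕ) :
    ∃ N : ℕ, ∀ π : List ℕ, IsPermList π → VerticalAlternation π → N ≤ π.length →
      ∃ β : List ℕ, IsPermList β ∧ β.length = 2 * k ∧
        (IsVertParallel β ∨ IsVertWedge β) ∧ PContains π β := by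
  refine ⟨2 * 4 ^ 4 ^ k, fun π hπ hva hN => ?_⟩
  obtain ⟨g, hg, h0, h1⟩ := exists_common_strictMono_or_strictAnti_subseq (k := k)
    (injective_pairEntry hπ.nodup 0) (injective_pairEntry hπ.nodup 1) (by simp; omega)
  exact exists_vertParallel_or_vertWedge_of_monotone_pairs hπ.nodup hva hg h0 h1

/-- every sufficiently long vertical alternation contains a vertical
parallel alternation of length `2k` or a vertical wedge alternation of length `2k`. -/
theorem stmt2 (k : ℕ) (hk : 0 < k) :
    ∃ N : ℕ, ∀ π : List ℕ, IsPermList π → VerticalAlternation π → N ≤ π.length →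
      ∃ β : List ℕ, IsPermList β ∧ β.length = 2 * k ∧
        (IsVertParallel β ∨ IsVertWedge β) ∧ PContains π β :=
  stmt2_general k
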